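/- Define Q^u_d(y) = Σ_{k=0}^{d} C(d,k) · ∏_{i=0}^{k-1}(i+1-r)(i+r) · ∏_{i=k+1}^{d}(y+d+r-i)(y+u+r+i). Then for all natural numbers u ≥ 1 and d ≥ 1, one has (u+d)(y+u+r) · Q^u_d(y) = u(y+u+d+r) · Q^{u-1}_d(y) + d(y+r)(y+u+1)(y+u+2r) · Q^u_{d-1}(y+1), as an identity of polynomials in y and r. -/

import Mathlib

/-!
Over any commutative ring, write `Q^u_d(y) = Σ_k C(d,k) a_k T^u_d(y,k)` with head products
`a_k = ∏_{i<k} (i+1-s)(i+s)` and tail products `T^u_d(y,k) = ∏_{i=k+1}^{d} (y+d+s-i)(y+u+s+i)`.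
Moving one factor across an end of the interval `[k+1, d]` relates `T^{u-1}_d(y,k)` and
`T^u_{d-1}(y+1,k)`, `T^u_{d-1}(y+1,k-1)` to `T^u_d(y,k)`. Splitting
`(y+u+1)(y+u+2s) = (y+u+s-k)(y+u+s+k+1) + (k+1-s)(k+s)` and absorbing the second part into
`a_{k+1}` turns the last summand into `Σ_k C(d,k) a_k (d(y+u+s) - uk) T^u_d(y,k)`, after which the
recurrence holds termwise.
-/

open Finset

/-- The two-variable polynomial ring `ℚ[y, r]`: variable `0` is `y` and variable `1` is `r`. -/
noncomputable abbrev R2 : Type := MvPolynomial (Fin 2) ℚ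

noncomputable def r : R2 := MvPolynomial.X 1

/-- `Q u d y = Σ_{k=0}^{d} C(d,k) ∏_{i=0}^{k-1}(i+1-r)(i+r) ∏_{i=k+1}^{d}(y+d+r-i)(y+u+r+i)`,
as a function of the element `y` (so that substitutions like `y ↦ y+1` are meaningful). -/
noncomputable def Q (u d : ℕ) (y : R2) : R2 :=
  ∑ k ∈ Finset.range (d + 1),
    (d.choose k : R2) * (∏ i ∈ Finset.range k, (((i : R2) + 1 - r) * ((i : R2) + r))) *
      ∏ i ∈ Finset.Icc (k + 1) d,
        ((y + (d : R2) + r - (i : R2)) * (y + (u : R2) + r + (i : R2)))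

/-- `φ d y = ∏_{i=1}^{d} (y+i)(y+i-1+2r)`. -/
noncomputable def phi (d : ℕ) (y : R2) : R2 :=
  ∏ i ∈ Finset.Icc 1 d, ((y + (i : R2)) * (y + (i : R2) - 1 + 2 * r))

section Telescoping

variable {M : Type*} [CommMonoid M]

theorem Finset.prod_Icc_add_one_add_one (f : ℕ → M) (a b : ℕ) :
    ∏ i ∈ Icc (a + 1) (b + 1), f i = ∏ i ∈ Icc a b, f (i + 1) := by
  rw [← map_add_right_Icc, prod_map]
  rfl

theorem Finset.prod_Icc_succ' {a b : ℕ} (hab : a ≤ b + 1) (f : ℕ → M) :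
    ∏ i ∈ Icc a (b + 1), f i = (∏ i ∈ Icc a b, f (i + 1)) * f a := by
  rw [← prod_Icc_add_one_add_one, Icc_add_one_left_eq_Ioc, prod_Ioc_mul_eq_prod_Icc hab]

theorem Finset.prod_Icc_shift_mul {a b : ℕ} (hab : a ≤ b + 1) (f : ℕ → M) :
    (∏ i ∈ Icc a b, f (i + 1)) * f a = (∏ i ∈ Icc a b, f i) * f (b + 1) := by
  rw [← prod_Icc_succ' hab, prod_Icc_succ_top hab]

end Telescoping

theorem cast_sub_mul_choose_succ {R : Type*} [CommRing R] {k d : ℕ} (hk : k ≤ d) :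
    ((d + 1 : R) - k) * (d + 1).choose k = (d + 1) * d.choose k := by
  have h := congrArg (Nat.cast : ℕ → R) (Nat.choose_mul_succ_eq d k)
  push_cast [Nat.cast_sub (by omega : k ≤ d + 1)] at h
  linear_combination -h

namespace QRecurrence

variable {R : Type*} [CommRing R]

noncomputable def headProd (s : R) (k : ℕ) : R :=
  ∏ i ∈ range k, (((i : R) + 1 - s) * ((i : R) + s))

noncomputable def tailProd (u d : ℕ) (y s : R) (k : ℕ) : R :=
  ∏ i ∈ Icc (k + 1) d, ((y + (d : R) + s - (i : R)) * (y + (u : R) + s + (i : R)))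

noncomputable def qSum (u d : ℕ) (y s : R) : R :=
  ∑ k ∈ range (d + 1), (d.choose k : R) * headProd s k * tailProd u d y s k

theorem Q_eq_qSum (u d : ℕ) (y : R2) : Q u d y = qSum u d y r := rfl

theorem headProd_succ (s : R) (k : ℕ) :
    headProd s (k + 1) = headProd s k * (((k : R) + 1 - s) * ((k : R) + s)) :=
  prod_range_succ _ _

theorem mul_tailProd_succ_left {k d : ℕ} (hk : k ≤ d) (u : ℕ) (y s : R) :
    (y + u + s + (k + 1)) * tailProd (u + 1) d y s k =
      (y + u + s + (d + 1)) * tailProd u d y s k := by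
  have rising : (y + u + s + (k + 1)) * ∏ i ∈ Icc (k + 1) d, (y + ((u + 1 : ℕ) : R) + s + i) =
      (y + u + s + (d + 1)) * ∏ i ∈ Icc (k + 1) d, (y + u + s + i) := by
    have shift :=
      prod_Icc_shift_mul (f := fun i : ℕ => y + u + s + i) (by omega : k + 1 ≤ d + 1)
    push_cast at shift ⊢
    ring_nf at shift ⊢
    linear_combination shift
  simp only [tailProd, prod_mul_distrib]
  linear_combination (∏ i ∈ Icc (k + 1) d, (y + d + s - i)) * rising

theorem tailProd_succ {k d : ℕ} (hk : k ≤ d) (u : ℕ) (y s : R) :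
    tailProd u (d + 1) y s k = (y + s) * (y + u + s + (k + 1)) * tailProd u d (y + 1) s k := by
  have falling : ∏ i ∈ Icc (k + 1) (d + 1), (y + ((d + 1 : ℕ) : R) + s - i) =
      (∏ i ∈ Icc (k + 1) d, (y + 1 + d + s - i)) * (y + s) := by
    rw [prod_Icc_succ_top (by omega)]
    push_cast
    ring_nf
  have rising : ∏ i ∈ Icc (k + 1) (d + 1), (y + u + s + i) =
      (∏ i ∈ Icc (k + 1) d, (y + 1 + u + s + i)) * (y + u + s + (k + 1)) := by
    rw [prod_Icc_succ' (by omega)]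
    push_cast
    ring_nf
  simp only [tailProd, prod_mul_distrib]
  rw [falling, rising]
  ring

theorem mul_tailProd_succ_succ {k d : ℕ} (hk : k ≤ d) (u : ℕ) (y s : R) :
    (y + d + s - k) * tailProd u (d + 1) y s (k + 1) = (y + s) * tailProd u d (y + 1) s k := by
  have falling :
      (y + d + s - k) * ∏ i ∈ Icc (k + 1 + 1) (d + 1), (y + ((d + 1 : ℕ) : R) + s - i) =
      (y + s) * ∏ i ∈ Icc (k + 1) d, (y + 1 + d + s - i) := by
    have shift := prod_Icc_shift_mul (f := fun i : ℕ => y + ((d + 1 : ℕ) : R) + s - i)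
      (by omega : k + 1 ≤ d + 1)
    rw [prod_Icc_add_one_add_one]
    push_cast at shift ⊢
    ring_nf at shift ⊢
    linear_combination shift
  have rising : ∏ i ∈ Icc (k + 1 + 1) (d + 1), (y + u + s + i) =
      ∏ i ∈ Icc (k + 1) d, (y + 1 + u + s + i) := by
    rw [prod_Icc_add_one_add_one]
    push_cast
    ring_nf
  simp only [tailProd, prod_mul_distrib]
  rw [← mul_assoc, falling, rising]
  ring

noncomputable def splitTail (u d : ℕ) (y s : R) (k : ℕ) : R :=
  ((d + 1 : R) - k) * (y + u + s - k) * (y + u + s + (k + 1)) * (y + s) * tailProd u d (y + 1) s k +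
    k * (y + s) * tailProd u d (y + 1) s (k - 1)

theorem splitTail_eq {k d : ℕ} (hk : k ≤ d + 1) (u : ℕ) (y s : R) :
    splitTail u d y s k = ((d + 1) * (y + u + s) - u * k) * tailProd u (d + 1) y s k := by
  have upper : ((d + 1 : R) - k) * ((y + s) * (y + u + s + (k + 1)) * tailProd u d (y + 1) s k) =
      ((d + 1 : R) - k) * tailProd u (d + 1) y s k := by
    rcases hk.lt_or_eq with hlt | rfl
    · rw [tailProd_succ (by omega)]
    · push_cast; ring
  have lower : (k : R) * ((y + s) * tailProd u d (y + 1) s (k - 1)) =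
      k * ((y + d + 1 + s - k) * tailProd u (d + 1) y s k) := by
    rcases k with _ | j
    · simp
    · rw [Nat.add_sub_cancel, ← mul_tailProd_succ_succ (by omega)]
      push_cast; ring
  rw [splitTail]
  linear_combination (y + u + s - k) * upper + lower

theorem mul_qSum_eq_sum_splitTail (u d : ℕ) (y s : R) :
    (d + 1) * (y + s) * (y + u + 1) * (y + u + 2 * s) * qSum u d (y + 1) s =
      ∑ k ∈ range (d + 2), ((d + 1).choose k : R) * headProd s k * splitTail u d y s k := by
  let upper (k : ℕ) : R := ((d + 1).choose k : R) * headProd s k *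
    (((d + 1 : R) - k) * (y + u + s - k) * (y + u + s + (k + 1)) * (y + s) *
      tailProd u d (y + 1) s k)
  let lower (k : ℕ) : R := ((d + 1).choose k : R) * headProd s k *
    (k * (y + s) * tailProd u d (y + 1) s (k - 1))
  -- `(y + u + 1) (y + u + 2s) = (y + u + s - k) (y + u + s + k + 1) + (k + 1 - s) (k + s)`, and the
  -- second part is absorbed into `headProd s (k + 1)`, i.e. moved to the index `k + 1`.
  have split (k : ℕ) (hk : k ≤ d) : (d + 1) * (y + s) * (y + u + 1) * (y + u + 2 * s) *
      ((d.choose k : R) * headProd s k * tailProd u d (y + 1) s k) = upper k + lower (k + 1) := by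
    have hchoose := congrArg (Nat.cast : ℕ → R) (Nat.add_one_mul_choose_eq d k)
    push_cast at hchoose
    simp only [upper, lower, headProd_succ, Nat.add_sub_cancel]
    push_cast
    linear_combination
      ((y + s) * headProd s k * ((k + 1 - s) * (k + s)) * tailProd u d (y + 1) s k) * hchoose -
        ((y + u + s - k) * (y + u + s + (k + 1)) * (y + s) * headProd s k *
          tailProd u d (y + 1) s k) *
          cast_sub_mul_choose_succ (R := R) hk
  calc _ = ∑ k ∈ range (d + 1), (upper k + lower (k + 1)) := by
        rw [qSum, mul_sum]
        exact sum_congr rfl fun k hk => split k (Nat.lt_succ_iff.mp (mem_range.mp hk))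
    _ = ∑ k ∈ range (d + 2), (upper k + lower k) := by
        have upper_top : upper (d + 1) = 0 := by simp [upper]
        have lower_zero : lower 0 = 0 := by simp [lower]
        rw [sum_add_distrib, sum_add_distrib, sum_range_succ upper (d + 1),
          sum_range_succ' lower (d + 1), upper_top, lower_zero, add_zero, add_zero]
    _ = _ := sum_congr rfl fun k _ => (mul_add _ _ _).symm

theorem qSum_recurrence (u d : ℕ) (y s : R) :
    ((u + 1 : R) + (d + 1)) * (y + (u + 1) + s) * qSum (u + 1) (d + 1) y s =
      (u + 1) * (y + (u + 1) + (d + 1) + s) * qSum u (d + 1) y s +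
        (d + 1) * (y + s) * (y + (u + 1) + 1) * (y + (u + 1) + 2 * s) *
          qSum (u + 1) d (y + 1) s := by
  have split := mul_qSum_eq_sum_splitTail (u + 1) d y s
  push_cast at split
  rw [split, qSum, qSum, mul_sum, mul_sum, ← sum_add_distrib]
  refine sum_congr rfl fun k hk => ?_
  have hk : k ≤ d + 1 := Nat.lt_succ_iff.mp (mem_range.mp hk)
  have raise := mul_tailProd_succ_left hk u y s
  have splitTerm := splitTail_eq hk (u + 1) y s
  push_cast at raise splitTerm ⊢
  linear_combination (((d + 1).choose k : R) * headProd s k) * ((u + 1) * raise - splitTerm)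

end QRecurrence

theorem stmt6 (u d : ℕ) (hu : 1 ≤ u) (hd : 1 ≤ d) :
    ((u : R2) + (d : R2)) * (MvPolynomial.X 0 + (u : R2) + r) * Q u d (MvPolynomial.X 0) =
      (u : R2) * (MvPolynomial.X 0 + (u : R2) + (d : R2) + r) * Q (u - 1) d (MvPolynomial.X 0) +
        (d : R2) * (MvPolynomial.X 0 + r) * (MvPolynomial.X 0 + (u : R2) + 1) *
          (MvPolynomial.X 0 + (u : R2) + 2 * r) * Q u (d - 1) (MvPolynomial.X 0 + 1) := by
  obtain ⟨u, rfl⟩ := Nat.exists_eq_add_of_le' hu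
  obtain ⟨d, rfl⟩ := Nat.exists_eq_add_of_le' hd
  simp only [Nat.add_sub_cancel, QRecurrence.Q_eq_qSum]
  push_cast
  exact QRecurrence.qSum_recurrence u d _ r
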